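/- arXiv:2503.05956 — 3 statements merged into one kernel-verified Lean document; each statement's English description precedes it below -/
import Mathlib

section
/- If O₁ is θ₁-averaged and O₂ is θ₂-averaged with θ₁, θ₂ ∈ (0,1), then the composition O₁ ∘ O₂ is θ-averaged with θ = (θ₁ + θ₂ − 2θ₁θ₂)/(1 − θ₁θ₂), and moreover θ ∈ (0,1). -/
/-!
An operator `O` is `θ`-averaged exactly when
`θ ‖O x - O y‖² + (1 - θ) ‖(x - y) - (O x - O y)‖² ≤ θ ‖x - y‖²` for all `x, y`.
For `u = x - y`, `v = O₂ x - O₂ y`, `w = O₁ (O₂ x) - O₁ (O₂ y)`, the residual `u - w` of `O₁ ∘ O₂`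
is the sum of the residuals `v - w` of `O₁` and `u - v` of `O₂`. Adding `θ₂` times the inequality
for `O₁` to `θ₁` times the one for `O₂`, and bounding `‖u - w‖²` by the weighted Cauchy–Schwarz
inequality `s t ‖p + q‖² ≤ (s + t) (t ‖p‖² + s ‖q‖²)`, gives the inequality for `O₁ ∘ O₂` with
`θ / (1 - θ) = θ₁ / (1 - θ₁) + θ₂ / (1 - θ₂)`.
-/

open Set

section Averaged

variable {E : Type*}

def IsAveraged [AddCommGroup E] [Module ℝ E] [PseudoEMetricSpace E] (θ : ℝ) (O : E → E) : Prop :=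
  ∃ R : E → E, LipschitzWith 1 R ∧ ∀ x, O x = (1 - θ) • x + θ • R x

theorem isAveraged_iff_norm_sub_le [SeminormedAddCommGroup E] [NormedSpace ℝ E]
    {θ : ℝ} (hθ : 0 < θ) {O : E → E} :
    IsAveraged θ O ↔ ∀ x y, ‖O x - O y - (1 - θ) • (x - y)‖ ≤ θ * ‖x - y‖ := by
  constructor
  · rintro ⟨R, hR, hO⟩ x y
    have h : O x - O y - (1 - θ) • (x - y) = θ • (R x - R y) := by
      rw [hO, hO, smul_sub, smul_sub]; abel
    rw [h, norm_smul, Real.norm_of_nonneg hθ.le]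
    gcongr
    simpa using (lipschitzWith_iff_norm_sub_le.mp hR) x y
  · intro h
    refine ⟨fun x => θ⁻¹ • (O x - (1 - θ) • x), lipschitzWith_iff_norm_sub_le.mpr fun x y => ?_,
      fun x => by rw [smul_inv_smul₀ hθ.ne', add_sub_cancel]⟩
    rw [← smul_sub, norm_smul, Real.norm_of_nonneg (inv_nonneg.mpr hθ.le), NNReal.coe_one,
      one_mul, inv_mul_le_iff₀ hθ, sub_sub_sub_comm, ← smul_sub]
    exact h x y

variable [NormedAddCommGroup E] [InnerProductSpace ℝ E]

theorem norm_sub_smul_sq_sub_sq (θ : ℝ) (u v : E) :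
    ‖v - (1 - θ) • u‖ ^ 2 - (θ * ‖u‖) ^ 2 = θ * ‖v‖ ^ 2 + (1 - θ) * ‖u - v‖ ^ 2 - θ * ‖u‖ ^ 2 := by
  rw [norm_sub_sq_real, norm_sub_sq_real, norm_smul, inner_smul_right, real_inner_comm,
    Real.norm_eq_abs, mul_pow, sq_abs]
  ring

theorem norm_sub_smul_le_iff {θ : ℝ} (hθ : 0 ≤ θ) (u v : E) :
    ‖v - (1 - θ) • u‖ ≤ θ * ‖u‖ ↔ θ * ‖v‖ ^ 2 + (1 - θ) * ‖u - v‖ ^ 2 ≤ θ * ‖u‖ ^ 2 := by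
  rw [← pow_le_pow_iff_left₀ (norm_nonneg _) (by positivity) two_ne_zero, ← sub_nonpos,
    norm_sub_smul_sq_sub_sq, sub_nonpos]

theorem isAveraged_iff {θ : ℝ} (hθ : 0 < θ) {O : E → E} :
    IsAveraged θ O ↔ ∀ x y,
      θ * ‖O x - O y‖ ^ 2 + (1 - θ) * ‖(x - y) - (O x - O y)‖ ^ 2 ≤ θ * ‖x - y‖ ^ 2 := by
  simp only [isAveraged_iff_norm_sub_le hθ, norm_sub_smul_le_iff hθ.le]

theorem mul_mul_norm_add_sq_le (s t : ℝ) (p q : E) :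
    s * t * ‖p + q‖ ^ 2 ≤ (s + t) * (t * ‖p‖ ^ 2 + s * ‖q‖ ^ 2) := by
  have h : (s + t) * (t * ‖p‖ ^ 2 + s * ‖q‖ ^ 2) - s * t * ‖p + q‖ ^ 2 = ‖t • p - s • q‖ ^ 2 := by
    rw [norm_sub_sq_real, norm_add_sq_real, norm_smul, norm_smul, real_inner_smul_left,
      real_inner_smul_right, Real.norm_eq_abs, Real.norm_eq_abs, mul_pow, mul_pow, sq_abs, sq_abs]
    ring
  exact sub_nonneg.mp (h ▸ sq_nonneg _)

theorem one_sub_mul_one_sub_mul_norm_sub_sq_le {a b : ℝ} (ha : 0 < a) (ha₁ : a ≤ 1) (hb : 0 < b)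
    (hb₁ : b ≤ 1) {u v w : E}
    (hv : b * ‖v‖ ^ 2 + (1 - b) * ‖u - v‖ ^ 2 ≤ b * ‖u‖ ^ 2)
    (hw : a * ‖w‖ ^ 2 + (1 - a) * ‖v - w‖ ^ 2 ≤ a * ‖v‖ ^ 2) :
    (1 - a) * (1 - b) * ‖u - w‖ ^ 2 ≤ (a + b - 2 * a * b) * (‖u‖ ^ 2 - ‖w‖ ^ 2) := by
  have hsum :
      b * (1 - a) * ‖v - w‖ ^ 2 + a * (1 - b) * ‖u - v‖ ^ 2 ≤ a * b * (‖u‖ ^ 2 - ‖w‖ ^ 2) := by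
    linear_combination b * hw + a * hv
  have hsplit := mul_mul_norm_add_sq_le (a * (1 - b)) (b * (1 - a)) (v - w) (u - v)
  rw [sub_add_sub_cancel'] at hsplit
  have hN : 0 ≤ a * (1 - b) + b * (1 - a) := by nlinarith
  refine le_of_mul_le_mul_left ?_ (mul_pos ha hb)
  calc a * b * ((1 - a) * (1 - b) * ‖u - w‖ ^ 2)
      = a * (1 - b) * (b * (1 - a)) * ‖u - w‖ ^ 2 := by ring
    _ ≤ (a * (1 - b) + b * (1 - a)) * (a * b * (‖u‖ ^ 2 - ‖w‖ ^ 2)) := hsplit.trans (by gcongr)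
    _ = a * b * ((a + b - 2 * a * b) * (‖u‖ ^ 2 - ‖w‖ ^ 2)) := by ring

theorem add_sub_two_mul_div_one_sub_mul_mem_Ioo {a b : ℝ} (ha : a ∈ Ioo 0 1) (hb : b ∈ Ioo 0 1) :
    (a + b - 2 * a * b) / (1 - a * b) ∈ Ioo 0 1 := by
  obtain ⟨ha₀, ha₁⟩ := ha
  obtain ⟨hb₀, hb₁⟩ := hb
  have hD : 0 < 1 - a * b := by nlinarith
  exact ⟨div_pos (by nlinarith) hD, (div_lt_one hD).mpr (by nlinarith)⟩

theorem IsAveraged.comp {a b : ℝ} (ha : a ∈ Ioo 0 1) (hb : b ∈ Ioo 0 1) {O₁ O₂ : E → E}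
    (h₁ : IsAveraged a O₁) (h₂ : IsAveraged b O₂) :
    IsAveraged ((a + b - 2 * a * b) / (1 - a * b)) (O₁ ∘ O₂) := by
  have hD : 0 < 1 - a * b := by nlinarith [ha.1, ha.2, hb.1, hb.2]
  rw [isAveraged_iff ha.1] at h₁
  rw [isAveraged_iff hb.1] at h₂
  rw [isAveraged_iff (add_sub_two_mul_div_one_sub_mul_mem_Ioo ha hb).1]
  intro x y
  set u := x - y
  set w := O₁ (O₂ x) - O₁ (O₂ y)
  have key := one_sub_mul_one_sub_mul_norm_sub_sq_le ha.1 ha.2.le hb.1 hb.2.le (h₂ x y)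
    (h₁ (O₂ x) (O₂ y))
  have h : (a + b - 2 * a * b) / (1 - a * b) * ‖w‖ ^ 2
      + (1 - (a + b - 2 * a * b) / (1 - a * b)) * ‖u - w‖ ^ 2
      - (a + b - 2 * a * b) / (1 - a * b) * ‖u‖ ^ 2
      = ((1 - a) * (1 - b) * ‖u - w‖ ^ 2 - (a + b - 2 * a * b) * (‖u‖ ^ 2 - ‖w‖ ^ 2))
        / (1 - a * b) := by
    field_simp
    ring
  exact sub_nonpos.mp (h ▸ div_nonpos_of_nonpos_of_nonneg (sub_nonpos.mpr key) hD.le)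

end Averaged

/-- The composition of a `θ₁`-averaged and a `θ₂`-averaged operator (with
`θ₁, θ₂ ∈ (0,1)`) is `θ`-averaged with `θ = (θ₁ + θ₂ − 2θ₁θ₂)/(1 − θ₁θ₂) ∈ (0,1)`. -/
theorem averaged_comp
    (n : ℕ) (O₁ O₂ : EuclideanSpace ℝ (Fin n) → EuclideanSpace ℝ (Fin n))
    (θ₁ θ₂ : ℝ) (hθ₁ : θ₁ ∈ Set.Ioo (0:ℝ) 1) (hθ₂ : θ₂ ∈ Set.Ioo (0:ℝ) 1)
    (hO₁ : ∃ R₁, LipschitzWith 1 R₁ ∧ ∀ x, O₁ x = (1 - θ₁) • x + θ₁ • R₁ x)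
    (hO₂ : ∃ R₂, LipschitzWith 1 R₂ ∧ ∀ x, O₂ x = (1 - θ₂) • x + θ₂ • R₂ x) :
    (θ₁ + θ₂ - 2 * θ₁ * θ₂) / (1 - θ₁ * θ₂) ∈ Set.Ioo (0:ℝ) 1 ∧
    ∃ R, LipschitzWith 1 R ∧ ∀ x,
      (O₁ ∘ O₂) x = (1 - (θ₁ + θ₂ - 2 * θ₁ * θ₂) / (1 - θ₁ * θ₂)) • x +
        ((θ₁ + θ₂ - 2 * θ₁ * θ₂) / (1 - θ₁ * θ₂)) • R x :=
  ⟨add_sub_two_mul_div_one_sub_mul_mem_Ioo hθ₁ hθ₂, IsAveraged.comp hθ₁ hθ₂ hO₁ hO₂⟩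
end

section
/- Let X be an ℝ^n-valued random variable with smooth density p_X, ξ ∼ N(0, I_n) independent of X, σ > 0, and Y = X + σξ with density p_σ = p_X * G_σ. Then Tweedie's identity holds: E[X | Y = y] = y + σ²·∇ log p_σ(y) for all y with p_σ(y) > 0. -/
open MeasureTheory Real InnerProductSpace Metric


variable {E : Type*} [NormedAddCommGroup E] [InnerProductSpace ℝ E] [CompleteSpace E]

lemma gauss_hasGradientAt (c σ : ℝ) (hσ : 0 < σ) (z : E) :
    HasGradientAt (fun w : E => c * Real.exp (-‖w‖ ^ 2 / (2 * σ ^ 2)))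
      ((c * Real.exp (-‖z‖ ^ 2 / (2 * σ ^ 2)) * -(σ ^ 2)⁻¹) • z) z := by
  have h1 : HasFDerivAt (fun w : E => ‖w‖ ^ 2) (2 • innerSL ℝ z) z :=
    (hasStrictFDerivAt_norm_sq z).hasFDerivAt
  have h2 : HasFDerivAt (fun w : E => -‖w‖ ^ 2 / (2 * σ ^ 2))
      ((-(2 * σ ^ 2)⁻¹) • (2 • innerSL ℝ z)) z := by
    have := h1.const_smul (-(2 * σ ^ 2)⁻¹)
    refine this.congr_of_eventuallyEq ?_
    exact Filter.Eventually.of_forall fun w => by rw [Pi.smul_apply, smul_eq_mul]; ring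
  have h3 := h2.exp
  have h4 := h3.const_mul c
  rw [hasGradientAt_iff_hasFDerivAt]
  refine h4.congr_fderiv ?_
  ext w
  simp only [toDual_apply_apply, real_inner_smul_left, ContinuousLinearMap.smul_apply,
    ContinuousLinearMap.coe_smul', Pi.smul_apply, innerSL_apply_apply, smul_eq_mul]
  have hσ2 : (σ:ℝ) ^ 2 ≠ 0 := by positivity
  field_simp
  ring

lemma grad_conv (n : ℕ) (pX : EuclideanSpace ℝ (Fin n) → ℝ)
    (hcont : Continuous pX) (hnonneg : ∀ x, 0 ≤ pX x) (hint : Integrable pX)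
    (σ c : ℝ) (hσ : 0 < σ) (hc : 0 < c)
    (Gσ : EuclideanSpace ℝ (Fin n) → ℝ)
    (hGσ : ∀ z, Gσ z = c * Real.exp (-‖z‖ ^ 2 / (2 * σ ^ 2)))
    (pσ : EuclideanSpace ℝ (Fin n) → ℝ)
    (hpσ : ∀ y, pσ y = ∫ x, pX x * Gσ (y - x))
    (y : EuclideanSpace ℝ (Fin n)) :
    HasGradientAt pσ (∫ x, (pX x * Gσ (y - x) * -(σ ^ 2)⁻¹) • (y - x)) y := by
  have hGcont : Continuous Gσ := by
    have hGfun : Gσ = fun z => c * Real.exp (-‖z‖ ^ 2 / (2 * σ ^ 2)) := funext hGσ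
    rw [hGfun]; fun_prop
  have hGpos : ∀ z : EuclideanSpace ℝ (Fin n), 0 < Gσ z := fun z => by rw [hGσ]; positivity
  have hGle : ∀ z : EuclideanSpace ℝ (Fin n), Gσ z ≤ c := by
    intro z; rw [hGσ]
    have h0 : -‖z‖ ^ 2 / (2 * σ ^ 2) ≤ 0 :=
      div_nonpos_of_nonpos_of_nonneg (neg_nonpos.mpr (by positivity)) (by positivity)
    nlinarith [Real.exp_le_one_iff.2 h0, Real.exp_pos (-‖z‖ ^ 2 / (2 * σ ^ 2))]
  have hGnorm : ∀ z : EuclideanSpace ℝ (Fin n), Gσ z * ‖z‖ ≤ c * σ := by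
    intro z
    rw [hGσ]
    have h2 := Real.add_one_le_exp (‖z‖ ^ 2 / (2 * σ ^ 2))
    have h3 : (0:ℝ) < 2 * σ ^ 2 := by positivity
    have h1 : ‖z‖ ≤ σ * Real.exp (‖z‖ ^ 2 / (2 * σ ^ 2)) := by
      have h4 : ‖z‖ ^ 2 / (2 * σ ^ 2) * σ = ‖z‖ ^ 2 / (2 * σ) := by
        field_simp
      have hA : ‖z‖ ≤ ‖z‖ ^ 2 / (2 * σ) + σ := by
        rw [div_add' _ _ _ (by positivity : (2 * σ : ℝ) ≠ 0), le_div_iff₀ (by positivity)]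
        nlinarith [sq_nonneg (‖z‖ - σ)]
      have hB := mul_le_mul_of_nonneg_right h2 hσ.le
      nlinarith
    have h5 : Real.exp (-‖z‖ ^ 2 / (2 * σ ^ 2)) * Real.exp (‖z‖ ^ 2 / (2 * σ ^ 2)) = 1 := by
      rw [← Real.exp_add]; ring_nf; exact Real.exp_zero
    have h6 := Real.exp_pos (-‖z‖ ^ 2 / (2 * σ ^ 2))
    have h7 : Real.exp (-‖z‖ ^ 2 / (2 * σ ^ 2)) * ‖z‖ ≤ σ := by
      nlinarith [mul_le_mul_of_nonneg_left h1 h6.le]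
    nlinarith [mul_le_mul_of_nonneg_left h7 hc.le]
  set v : EuclideanSpace ℝ (Fin n) → EuclideanSpace ℝ (Fin n) → EuclideanSpace ℝ (Fin n) :=
    fun y x => (pX x * Gσ (y - x) * -(σ ^ 2)⁻¹) • (y - x) with hv
  have hvcont : ∀ y', Continuous (v y') := by
    intro y'; rw [hv]; dsimp only; fun_prop
  have hvnorm : ∀ y' x, ‖v y' x‖ ≤ pX x * ((σ ^ 2)⁻¹ * (c * σ)) := by
    intro y' x
    have h9 : ‖v y' x‖ = pX x * Gσ (y' - x) * (σ ^ 2)⁻¹ * ‖y' - x‖ := by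
      rw [hv, norm_smul]
      simp only [norm_mul, Real.norm_eq_abs, abs_neg, abs_inv, abs_of_nonneg (hnonneg x),
        abs_of_pos (hGpos (y' - x)), abs_of_pos (by positivity : (0:ℝ) < σ ^ 2)]
    rw [h9]
    have h7 := hGnorm (y' - x)
    have h8 : (0:ℝ) ≤ (σ ^ 2)⁻¹ := by positivity
    calc pX x * Gσ (y' - x) * (σ ^ 2)⁻¹ * ‖y' - x‖
        = pX x * (σ ^ 2)⁻¹ * (Gσ (y' - x) * ‖y' - x‖) := by ring
      _ ≤ pX x * (σ ^ 2)⁻¹ * (c * σ) :=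
          mul_le_mul_of_nonneg_left h7 (mul_nonneg (hnonneg x) h8)
      _ = pX x * ((σ ^ 2)⁻¹ * (c * σ)) := by ring
  have hdiff : ∀ (x y' : EuclideanSpace ℝ (Fin n)),
      HasFDerivAt (fun y => pX x * Gσ (y - x)) (innerSL ℝ (v y' x)) y' := by
    intro x y'
    have hg := (gauss_hasGradientAt c σ hσ (y' - x)).hasFDerivAt
    have hsub : HasFDerivAt (fun y : EuclideanSpace ℝ (Fin n) => y - x)
        (ContinuousLinearMap.id ℝ (EuclideanSpace ℝ (Fin n))) y' :=
      (hasFDerivAt_id y').sub_const x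
    have hmul := (hg.comp y' hsub).const_mul (pX x)
    have hQ : ∀ z : EuclideanSpace ℝ (Fin n),
        c * Real.exp (-‖z‖ ^ 2 / (2 * σ ^ 2)) = Gσ z := fun z => (hGσ z).symm
    refine (hmul.congr_of_eventuallyEq ?_).congr_fderiv ?_
    · exact Filter.Eventually.of_forall fun w => by simp only [Function.comp_apply]; rw [hQ]
    ext w
    simp only [hv, innerSL_apply_apply, real_inner_smul_left, ContinuousLinearMap.smul_apply,
      ContinuousLinearMap.coe_comp', Function.comp_apply, ContinuousLinearMap.coe_id', id_eq,
      toDual_apply_apply, smul_eq_mul, hQ]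
    ring
  have hFcont : ∀ y', Continuous (fun x => pX x * Gσ (y' - x)) := by intro y'; fun_prop
  have hFint : ∀ y', Integrable (fun x => pX x * Gσ (y' - x)) := by
    intro y'
    apply Integrable.mono' (hint.mul_const c) (hFcont y').aestronglyMeasurable
    refine Filter.Eventually.of_forall fun x => ?_
    simp only [Real.norm_eq_abs, abs_mul, abs_of_nonneg (hnonneg x),
      abs_of_pos (hGpos (y' - x))]
    exact mul_le_mul_of_nonneg_left (hGle _) (hnonneg x)
  have key := hasFDerivAt_integral_of_dominated_of_fderiv_le (μ := volume)
    (F := fun y x => pX x * Gσ (y - x)) (F' := fun y' x => innerSL ℝ (v y' x)) (x₀ := y)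
    (bound := fun x => pX x * ((σ ^ 2)⁻¹ * (c * σ)))
    (Metric.ball_mem_nhds y one_pos)
    (Filter.Eventually.of_forall fun y' => (hFcont y').aestronglyMeasurable)
    (hFint y)
    (((innerSL ℝ).continuous.comp (hvcont y)).aestronglyMeasurable)
    (Filter.Eventually.of_forall fun x => fun y' _ => by
      rw [innerSL_apply_norm]; exact hvnorm y' x)
    (hint.mul_const _)
    (Filter.Eventually.of_forall fun x => fun y' _ => hdiff x y')
  have hIv : Integrable (v y) := by
    apply Integrable.mono' (hint.mul_const ((σ ^ 2)⁻¹ * (c * σ))) (hvcont y).aestronglyMeasurable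
    exact Filter.Eventually.of_forall fun x => hvnorm y x
  have hcomm := (innerSL ℝ (E := EuclideanSpace ℝ (Fin n))).integral_comp_comm hIv
  rw [hcomm] at key
  have hpfun : pσ = fun y => ∫ x, pX x * Gσ (y - x) := funext hpσ
  rw [hasGradientAt_iff_hasFDerivAt, hpfun]
  refine key.congr_fderiv ?_
  ext w; rw [hv]; simp only [toDual_apply_apply, innerSL_apply_apply]; rfl

/-- Tweedie's identity: for a smooth prior density `p_X`, noise level `σ > 0`, Gaussian
kernel `G_σ`, noisy density `p_σ = p_X * G_σ`, the posterior mean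
`E[X | Y = y] = (∫ x, p_X x · G_σ(y−x) • x) / p_σ(y)` satisfies
`E[X | Y = y] = y + σ² ∇ log p_σ(y)` at every `y` with `p_σ(y) > 0`. -/
theorem tweedie_identity
    (n : ℕ) (pX : EuclideanSpace ℝ (Fin n) → ℝ)
    (hsmooth : ContDiff ℝ (⊤ : ℕ∞) pX)
    (hnonneg : ∀ x, 0 ≤ pX x)
    (hint : Integrable pX)
    (hprob : ∫ x, pX x = 1)
    (hmoment : Integrable (fun x => ‖x‖ * pX x))
    (σ : ℝ) (hσ : 0 < σ)
    (Gσ : EuclideanSpace ℝ (Fin n) → ℝ)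
    (hGσ : ∀ z, Gσ z = (2 * π * σ ^ 2) ^ (-(n : ℝ) / 2) * Real.exp (-‖z‖ ^ 2 / (2 * σ ^ 2)))
    (pσ : EuclideanSpace ℝ (Fin n) → ℝ)
    (hpσ : ∀ y, pσ y = ∫ x, pX x * Gσ (y - x))
    (mmse : EuclideanSpace ℝ (Fin n) → EuclideanSpace ℝ (Fin n))
    (hmmse : ∀ y, mmse y = (pσ y)⁻¹ • ∫ x, (pX x * Gσ (y - x)) • x) :
    ∀ y, 0 < pσ y → mmse y = y + (σ ^ 2 * (pσ y)⁻¹) • gradient pσ y := by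
  intro y hy
  set c : ℝ := (2 * π * σ ^ 2) ^ (-(n : ℝ) / 2) with hcdef
  have hc : 0 < c := Real.rpow_pos_of_pos (by positivity) _
  have hGpos : ∀ z : EuclideanSpace ℝ (Fin n), 0 < Gσ z := fun z => by rw [hGσ]; positivity
  have hGle : ∀ z : EuclideanSpace ℝ (Fin n), Gσ z ≤ c := by
    intro z; rw [hGσ]
    have h0 : -‖z‖ ^ 2 / (2 * σ ^ 2) ≤ 0 :=
      div_nonpos_of_nonpos_of_nonneg (neg_nonpos.mpr (by positivity)) (by positivity)
    nlinarith [Real.exp_le_one_iff.2 h0, Real.exp_pos (-‖z‖ ^ 2 / (2 * σ ^ 2))]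
  have hGcont : Continuous Gσ := by
    have hGfun : Gσ = fun z => c * Real.exp (-‖z‖ ^ 2 / (2 * σ ^ 2)) := funext hGσ
    rw [hGfun]; fun_prop
  have hcontX : Continuous pX := hsmooth.continuous
  -- gradient formula
  have hgrad := grad_conv n pX hcontX hnonneg hint σ c hσ hc Gσ hGσ pσ hpσ y
  -- integrability
  have hFcont : Continuous (fun x => pX x * Gσ (y - x)) := by fun_prop
  have habs : ∀ x : EuclideanSpace ℝ (Fin n), ‖pX x * Gσ (y - x)‖ = pX x * Gσ (y - x) := by
    intro x
    rw [Real.norm_eq_abs, abs_mul, abs_of_nonneg (hnonneg x), abs_of_pos (hGpos (y - x))]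
  have hFint : Integrable (fun x => pX x * Gσ (y - x)) := by
    apply Integrable.mono' (hint.mul_const c) hFcont.aestronglyMeasurable
    refine Filter.Eventually.of_forall fun x => ?_
    rw [habs x]
    exact mul_le_mul_of_nonneg_left (hGle _) (hnonneg x)
  have hI1 : Integrable (fun x : EuclideanSpace ℝ (Fin n) => (pX x * Gσ (y - x)) • x) := by
    apply Integrable.mono' ((hmoment.const_mul c)) (hFcont.smul continuous_id).aestronglyMeasurable
    refine Filter.Eventually.of_forall fun x => ?_
    change ‖(pX x * Gσ (y - x)) • x‖ ≤ _
    rw [norm_smul, habs x]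
    calc pX x * Gσ (y - x) * ‖x‖ ≤ pX x * c * ‖x‖ := by
          apply mul_le_mul_of_nonneg_right _ (norm_nonneg x)
          exact mul_le_mul_of_nonneg_left (hGle _) (hnonneg x)
      _ = c * (‖x‖ * pX x) := by ring
  have hI2 : Integrable (fun x : EuclideanSpace ℝ (Fin n) => (pX x * Gσ (y - x)) • y) :=
    hFint.smul_const y
  set I : EuclideanSpace ℝ (Fin n) := ∫ x, (pX x * Gσ (y - x)) • x with hI
  -- rewrite the gradient
  have hgval : gradient pσ y = (-(σ ^ 2)⁻¹) • (pσ y • y - I) := by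
    rw [hgrad.gradient]
    have e1 : (fun x : EuclideanSpace ℝ (Fin n) => (pX x * Gσ (y - x) * -(σ ^ 2)⁻¹) • (y - x))
        = fun x => (-(σ ^ 2)⁻¹) • ((pX x * Gσ (y - x)) • (y - x)) := by
      funext x; rw [smul_smul]; ring_nf
    rw [e1, integral_smul]
    congr 1
    have e2 : (fun x : EuclideanSpace ℝ (Fin n) => (pX x * Gσ (y - x)) • (y - x))
        = fun x => (pX x * Gσ (y - x)) • y - (pX x * Gσ (y - x)) • x := by
      funext x; rw [smul_sub]
    rw [e2, integral_sub hI2 hI1, integral_smul_const, ← hpσ y]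
  rw [hmmse, hgval, ← hI]
  have key : (σ ^ 2 * (pσ y)⁻¹) • ((-(σ ^ 2)⁻¹) • (pσ y • y - I)) = (pσ y)⁻¹ • I - y := by
    rw [smul_smul]
    have h1 : σ ^ 2 * (pσ y)⁻¹ * -(σ ^ 2)⁻¹ = -(pσ y)⁻¹ := by
      field_simp
    rw [h1, neg_smul, smul_sub, smul_smul, inv_mul_cancel₀ hy.ne', one_smul, neg_sub]
  rw [key]
  abel
end

section
/- With the setup above, if E[‖E[X|Y] − X‖²] = E[‖D(Y) − X‖²] (i.e., D achieves the MMSE), and E[⟨σξ, D(Y) − Y⟩] ≠ 0, then δ_opt² = 1; equivalently, E[‖D(Y) − Y‖²] = −E[⟨σξ, D(Y) − Y⟩]. -/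
/-!
The conditional expectation `E[X|Y]` is the orthogonal projection of `X` onto the `Y`-measurable
square-integrable functions, so its residual `E[X|Y] - X` is orthogonal to every such function.
By Pythagoras, `E‖D(Y) - X‖² = E‖D(Y) - E[X|Y]‖² + E‖E[X|Y] - X‖²`, so an MMSE-attaining `D`
satisfies `D(Y) = E[X|Y]` almost surely. Writing `σξ = Y - X = (Y - D(Y)) + (D(Y) - X)` and using
orthogonality of the residual `D(Y) - X` to the `Y`-measurable `D(Y) - Y` gives
`E⟨σξ, D(Y) - Y⟩ = -E‖D(Y) - Y‖²`.
-/

open MeasureTheory ProbabilityTheory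
open scoped RealInnerProductSpace

namespace MeasureTheory

variable {α E : Type*} [NormedAddCommGroup E] {m m0 : MeasurableSpace α} {μ : Measure[m0] α}
  {f g h : α → E}

theorem MemLp.integrable_norm_sq (hf : MemLp f 2 μ) : Integrable (fun x => ‖f x‖ ^ 2) μ :=
  (memLp_two_iff_integrable_sq_norm hf.1).1 hf

variable [InnerProductSpace ℝ E]

theorem MemLp.integrable_inner (hf : MemLp f 2 μ) (hg : MemLp g 2 μ) :
    Integrable (fun x => ⟪f x, g x⟫) μ := by
  refine (L2.integrable_inner (𝕜 := ℝ) (hf.toLp f) (hg.toLp g)).congr ?_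
  filter_upwards [hf.coeFn_toLp, hg.coeFn_toLp] with x hfx hgx
  rw [hfx, hgx]

variable [CompleteSpace E] [IsFiniteMeasure μ]

theorem integral_inner_condExp_sub_eq_zero (hm : m ≤ m0) (hf : MemLp f 2 μ) (hg : MemLp g 2 μ)
    (hgm : AEStronglyMeasurable[m] g μ) :
    ∫ x, ⟪(μ[f | m]) x - f x, g x⟫ ∂μ = 0 := by
  have hL2 := inner_condExpL2_eq_inner_fun (𝕜 := ℝ) hm (hf.toLp f) (hg.toLp g)
    (hgm.congr hg.coeFn_toLp.symm)
  rw [L2.inner_def, L2.inner_def] at hL2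
  have hcond : ∫ x, ⟪(μ[f | m]) x, g x⟫ ∂μ = ∫ x, ⟪f x, g x⟫ ∂μ := by
    convert hL2 using 1 <;> refine integral_congr_ae ?_
    · filter_upwards [hf.condExpL2_ae_eq_condExp (𝕜 := ℝ) hm, hg.coeFn_toLp] with x hCx hgx
      rw [hCx, hgx]
    · filter_upwards [hf.coeFn_toLp, hg.coeFn_toLp] with x hfx hgx
      rw [hfx, hgx]
  simp_rw [inner_sub_left]
  rw [integral_sub ((hf.condExp one_le_two).integrable_inner hg) (hf.integrable_inner hg), hcond,
    sub_self]

theorem integral_norm_sub_sq_eq_add_condExp (hm : m ≤ m0) (hf : MemLp f 2 μ) (hg : MemLp g 2 μ)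
    (hgm : AEStronglyMeasurable[m] g μ) :
    ∫ x, ‖g x - f x‖ ^ 2 ∂μ =
      ∫ x, ‖(μ[f | m]) x - f x‖ ^ 2 ∂μ + ∫ x, ‖g x - (μ[f | m]) x‖ ^ 2 ∂μ := by
  have hC := hf.condExp (m := m) one_le_two
  have horth := integral_inner_condExp_sub_eq_zero hm hf (hg.sub hC)
    (hgm.sub stronglyMeasurable_condExp.aestronglyMeasurable)
  have hresid : Integrable (fun x => ‖(μ[f | m]) x - f x‖ ^ 2) μ := (hC.sub hf).integrable_norm_sq
  have hcross : Integrable (fun x => 2 * ⟪(μ[f | m]) x - f x, g x - (μ[f | m]) x⟫) μ :=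
    ((hC.sub hf).integrable_inner (hg.sub hC)).const_mul 2
  have hgC : Integrable (fun x => ‖g x - (μ[f | m]) x‖ ^ 2) μ := (hg.sub hC).integrable_norm_sq
  have hsplit : ∀ x, g x - f x = ((μ[f | m]) x - f x) + (g x - (μ[f | m]) x) := fun x => by abel
  simp_rw [hsplit, norm_add_sq_real]
  rw [integral_add (by exact hresid.add hcross) hgC, integral_add hresid hcross,
    integral_const_mul]
  simp only [Pi.sub_apply] at horth
  rw [horth, mul_zero, add_zero]

theorem ae_eq_condExp_of_integral_norm_sub_sq_eq (hm : m ≤ m0) (hf : MemLp f 2 μ)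
    (hg : MemLp g 2 μ) (hgm : AEStronglyMeasurable[m] g μ)
    (hmin : ∫ x, ‖(μ[f | m]) x - f x‖ ^ 2 ∂μ = ∫ x, ‖g x - f x‖ ^ 2 ∂μ) :
    g =ᵐ[μ] μ[f | m] := by
  have hint : Integrable (fun x => ‖g x - (μ[f | m]) x‖ ^ 2) μ :=
    (hg.sub (hf.condExp one_le_two)).integrable_norm_sq
  rw [integral_norm_sub_sq_eq_add_condExp hm hf hg hgm, left_eq_add,
    integral_eq_zero_iff_of_nonneg (fun x => sq_nonneg _) hint] at hmin
  filter_upwards [hmin] with x hx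
  simpa [sub_eq_zero] using hx

theorem integral_inner_sub_of_ae_eq_condExp (hm : m ≤ m0) (hf : MemLp f 2 μ)
    (hg : g =ᵐ[μ] μ[f | m]) (hh : MemLp h 2 μ) (hhm : AEStronglyMeasurable[m] h μ) :
    ∫ x, ⟪h x - f x, g x - h x⟫ ∂μ = -∫ x, ‖g x - h x‖ ^ 2 ∂μ := by
  have hgh : MemLp (g - h) 2 μ := ((hf.condExp one_le_two).ae_eq hg.symm).sub hh
  have hghm : AEStronglyMeasurable[m] (g - h) μ :=
    (stronglyMeasurable_condExp.aestronglyMeasurable.congr hg.symm).sub hhm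
  have horth := integral_inner_condExp_sub_eq_zero hm hf hgh hghm
  have hsplit : ∀ᵐ x ∂μ, ⟪h x - f x, g x - h x⟫ =
      ⟪(μ[f | m]) x - f x, g x - h x⟫ - ‖g x - h x‖ ^ 2 := by
    filter_upwards [hg] with x hx
    rw [← hx, ← real_inner_self_eq_norm_sq, ← inner_sub_left]
    congr 1
    abel
  have hinner : Integrable (fun x => ⟪(μ[f | m]) x - f x, g x - h x⟫) μ :=
    ((hf.condExp one_le_two).sub hf).integrable_inner hgh
  have hnorm : Integrable (fun x => ‖g x - h x‖ ^ 2) μ := hgh.integrable_norm_sq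
  rw [integral_congr_ae hsplit, integral_sub hinner hnorm]
  simp only [Pi.sub_apply] at horth
  rw [horth, zero_sub]

end MeasureTheory

theorem mmse_attained_implies_delta_opt_one_general
    (n : ℕ) (Ω : Type*) [MeasurableSpace Ω] (μ : Measure Ω) [IsProbabilityMeasure μ]
    (X ξ : Ω → EuclideanSpace ℝ (Fin n))
    (hXmeas : Measurable X) (hξmeas : Measurable ξ)
    (hX2 : MemLp X 2 μ) (hξ2 : MemLp ξ 2 μ)
    (σ : ℝ)
    (Y : Ω → EuclideanSpace ℝ (Fin n)) (hY : ∀ ω, Y ω = X ω + σ • ξ ω)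
    (D : EuclideanSpace ℝ (Fin n) → EuclideanSpace ℝ (Fin n)) (hDmeas : Measurable D)
    (hD2 : MemLp (fun ω => D (Y ω)) 2 μ)
    (a b : ℝ)
    (ha : a = ∫ ω, ‖D (Y ω) - Y ω‖ ^ 2 ∂μ)
    (hb : b = ∫ ω, inner ℝ (σ • ξ ω) (D (Y ω) - Y ω) ∂μ)
    (hb0 : b ≠ 0)
    (hmmse : ∫ ω, ‖(μ[X | MeasurableSpace.comap Y inferInstance]) ω - X ω‖ ^ 2 ∂μ =
      ∫ ω, ‖D (Y ω) - X ω‖ ^ 2 ∂μ) :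
    -a / b = 1 ∧ a = -b := by
  have hYeq : Y = X + σ • ξ := funext hY
  have hYm : Measurable Y := hYeq ▸ hXmeas.add (hξmeas.const_smul σ)
  have hY2 : MemLp Y 2 μ := hYeq ▸ hX2.add (hξ2.const_smul σ)
  have hle := hYm.comap_le
  have hDY := ae_eq_condExp_of_integral_norm_sub_sq_eq hle hX2 hD2
    (hDmeas.comp (comap_measurable Y)).aestronglyMeasurable hmmse
  have hab : b = -a := by
    rw [hb, ha, ← integral_inner_sub_of_ae_eq_condExp hle hX2 hDY hY2
      (comap_measurable Y).aestronglyMeasurable]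
    simp_rw [hY, add_sub_cancel_left]
  have ha0 : a ≠ 0 := fun h => hb0 (by rw [hab, h, neg_zero])
  exact ⟨by rw [hab, neg_div_neg_eq, div_self ha0], by rw [hab, neg_neg]⟩

/-- If `D` achieves the MMSE, i.e. `E[‖E[X|Y] − X‖²] = E[‖D(Y) − X‖²]`, and
`E[⟨σξ, D(Y) − Y⟩] ≠ 0`, then `δ_opt² = 1`, i.e.
`E[‖D(Y) − Y‖²] = −E[⟨σξ, D(Y) − Y⟩]`. -/
theorem mmse_attained_implies_delta_opt_one
    (n : ℕ) (Ω : Type*) [MeasurableSpace Ω] (μ : Measure Ω) [IsProbabilityMeasure μ]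
    (X ξ : Ω → EuclideanSpace ℝ (Fin n))
    (hXmeas : Measurable X) (hξmeas : Measurable ξ)
    (hX2 : MemLp X 2 μ) (hξ2 : MemLp ξ 2 μ)
    (hindep : IndepFun X ξ μ)
    (hξgauss : iIndepFun (fun i ω => ξ ω i) μ ∧
      ∀ i : Fin n, Measure.map (fun ω => ξ ω i) μ = gaussianReal 0 1)
    (σ : ℝ) (hσ : 0 < σ)
    (Y : Ω → EuclideanSpace ℝ (Fin n)) (hY : ∀ ω, Y ω = X ω + σ • ξ ω)
    (D : EuclideanSpace ℝ (Fin n) → EuclideanSpace ℝ (Fin n)) (hDmeas : Measurable D)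
    (hD2 : MemLp (fun ω => D (Y ω)) 2 μ)
    (L : ℝ → ℝ)
    (hL : ∀ δ : ℝ, L δ = ∫ ω, ‖Y ω + (δ ^ 2)⁻¹ • (D (Y ω) - Y ω) - X ω‖ ^ 2 ∂μ)
    (a b : ℝ)
    (ha : a = ∫ ω, ‖D (Y ω) - Y ω‖ ^ 2 ∂μ)
    (hb : b = ∫ ω, inner ℝ (σ • ξ ω) (D (Y ω) - Y ω) ∂μ)
    (hb0 : b ≠ 0) (ha0 : 0 < a)
    (hmmse : ∫ ω, ‖(μ[X | MeasurableSpace.comap Y inferInstance]) ω - X ω‖ ^ 2 ∂μ =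
      ∫ ω, ‖D (Y ω) - X ω‖ ^ 2 ∂μ) :
    -a / b = 1 ∧ a = -b :=
  mmse_attained_implies_delta_opt_one_general n Ω μ X ξ hXmeas hξmeas hX2 hξ2 σ Y hY D hDmeas hD2 a
    b ha hb hb0 hmmse
end
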